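/- arXiv:1106.2424 — 2 statements merged into one kernel-verified Lean document; each statement's English description precedes it below -/
import Mathlib

section
/- Let (W,S) be a Coxeter system and let I be a subset of S. The following three conditions are equivalent: (a) the standard parabolic subgroup W_I generated by I is finite; (b) there exists an element w of W such that l(sw) < l(w) for all s in I; (c) there exists an element w of W such that l(ws) < l(w) for all s in I. -/
/-!
The simple reflection `s i` acts on `W × ℤˣ` by `(t, ε) ↦ (s i * t * s i, ±ε)`, the sign flipping
exactly when `t = s i`. Along the word `(s i s j) ^ (M i j)` every element is passed an even number
of times, so this is an action of `W`, and the sign `η w t` (`inversionSign`) acquired by `(t, 1)`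
is `-1` exactly when the reflection `t` is a right inversion of `w`; moreover
`η (u v) t = η v t * η u (v t v⁻¹)`. Hence every right inversion of `π ω` occurs in the right
inversion sequence of `ω` (strong exchange), the inversion set `N w` (`rightInversionSet`) is
finite, and `w` is determined by `N w`.

If every `s i` with `i ∈ I` is a right descent of `w`, induction along a reduced `I`-word of
`u ∈ W_I` gives `ℓ (w u) + ℓ u ≤ ℓ w`, hence `N u ⊆ N w`, so `u ↦ N u` embeds `W_I` into the
finite power set of `N w`. Conversely, an element of maximal length in a finite `W_I` has every
`s i` as a right descent; inversion exchanges left and right descents.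
-/

namespace CoxeterSystem

open List

variable {B W : Type*} [Group W] {M : CoxeterMatrix B} (cs : CoxeterSystem M W)

local prefix:100 "s " => cs.simple
local prefix:100 "π " => cs.wordProd
local prefix:100 "ℓ " => cs.length

theorem simple_mul_mul_simple_eq_simple_iff (i : B) (t : W) : s i * t * s i = s i ↔ t = s i := by
  constructor
  · intro h
    simpa [mul_assoc] using congrArg (s i * · * s i) h
  · rintro rfl
    simp

open Classical in
noncomputable def signPerm (i : B) : Equiv.Perm (W × ℤˣ) :=
  Function.Involutive.toPerm (fun x => (s i * x.1 * s i, if x.1 = s i then -x.2 else x.2)) <| by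
    rintro ⟨t, ε⟩
    simp only [simple_mul_mul_simple_eq_simple_iff]
    by_cases h : t = s i <;> simp [h, mul_assoc]

open Classical in
theorem signPerm_apply (i : B) (t : W) (ε : ℤˣ) :
    cs.signPerm i (t, ε) = (s i * t * s i, if t = s i then -ε else ε) := rfl

open Classical in
theorem prod_map_signPerm_apply (ω : List B) (t : W) (ε : ℤˣ) :
    (ω.map cs.signPerm).prod (t, ε) =
      (π ω * t * (π ω)⁻¹, (-1) ^ (cs.rightInvSeq ω).count t * ε) := by
  induction ω generalizing t ε with
  | nil => simp
  | cons i ω ih =>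
    have hconj : π ω * t * (π ω)⁻¹ = s i ↔ (π ω)⁻¹ * s i * π ω = t := by
      constructor <;> intro h <;> rw [← h] <;> group
    rw [map_cons, prod_cons, Equiv.Perm.mul_apply, ih, signPerm_apply, rightInvSeq, count_cons,
      wordProd_cons, hconj]
    refine Prod.ext (by simp only [mul_inv_rev, inv_simple]; group) ?_
    by_cases h : (π ω)⁻¹ * s i * π ω = t <;> simp [h, pow_succ]

theorem reverse_alternatingWord_two_mul (i j : B) (p : ℕ) :
    (alternatingWord i j (2 * p)).reverse = alternatingWord j i (2 * p) := by
  induction p with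
  | zero => rfl
  | succ p ih =>
    rw [show 2 * (p + 1) = 2 * p + 1 + 1 by ring, alternatingWord_succ', alternatingWord_succ',
      alternatingWord_succ, alternatingWord_succ]
    simp [ih]

theorem prod_map_alternatingWord_two_mul {G : Type*} [Monoid G] (f : B → G) (i j : B) (p : ℕ) :
    ((alternatingWord i j (2 * p)).map f).prod = (f i * f j) ^ p := by
  induction p with
  | zero => simp [alternatingWord]
  | succ p ih =>
    rw [show 2 * (p + 1) = 2 * p + 1 + 1 by ring, alternatingWord_succ', alternatingWord_succ']
    simp [ih, pow_succ', mul_assoc]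

theorem leftInvSeq_alternatingWord_two_mul (i j : B) (p : ℕ) :
    cs.leftInvSeq (alternatingWord i j (2 * p)) =
      (range (2 * p)).map fun k => s i * (s j * s i) ^ k := by
  refine ext_getElem (by simp) fun k hk _ => ?_
  rw [getElem_leftInvSeq_alternatingWord cs i j p k (by simpa using hk),
    prod_alternatingWord_eq_mul_pow]
  simp [Nat.mul_add_div]

theorem even_count_map_range_two_mul {α : Type*} [BEq α] {f : ℕ → α} {p : ℕ}
    (hf : ∀ k, f (p + k) = f k) (a : α) : Even (((range (2 * p)).map f).count a) := by
  rw [two_mul, range_add, map_append, map_map, count_append,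
    show f ∘ (p + ·) = f from funext hf]
  exact ⟨_, rfl⟩

theorem signPerm_isLiftable : M.IsLiftable cs.signPerm := by
  intro i j
  classical
  have hπ : π (alternatingWord i j (2 * M i j)) = 1 :=
    (prod_map_alternatingWord_two_mul cs.simple i j _).trans (cs.simple_mul_simple_pow i j)
  ext ⟨t, ε⟩ : 1
  have heven : Even ((cs.rightInvSeq (alternatingWord i j (2 * M i j))).count t) := by
    rw [← reverse_alternatingWord_two_mul j i, rightInvSeq_reverse, count_reverse,
      leftInvSeq_alternatingWord_two_mul]
    exact even_count_map_range_two_mul (fun k => by simp [pow_add, simple_mul_simple_pow]) t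
  rw [← prod_map_alternatingWord_two_mul, prod_map_signPerm_apply, hπ, heven.neg_one_pow]
  simp

noncomputable def signRep : W →* Equiv.Perm (W × ℤˣ) :=
  cs.lift ⟨cs.signPerm, cs.signPerm_isLiftable⟩

theorem signRep_wordProd (ω : List B) : cs.signRep (π ω) = (ω.map cs.signPerm).prod := by
  rw [wordProd, map_list_prod, map_map]
  exact congrArg _ (map_congr_left fun i _ => cs.lift_apply_simple cs.signPerm_isLiftable i)

noncomputable def inversionSign (w t : W) : ℤˣ := (cs.signRep w (t, 1)).2

open Classical in
theorem inversionSign_wordProd (ω : List B) (t : W) :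
    cs.inversionSign (π ω) t = (-1) ^ (cs.rightInvSeq ω).count t := by
  rw [inversionSign, signRep_wordProd, prod_map_signPerm_apply, mul_one]

theorem signRep_apply (w t : W) (ε : ℤˣ) :
    cs.signRep w (t, ε) = (w * t * w⁻¹, cs.inversionSign w t * ε) := by
  classical
  obtain ⟨ω, rfl⟩ := cs.wordProd_surjective w
  rw [signRep_wordProd, prod_map_signPerm_apply, inversionSign_wordProd]

theorem inversionSign_mul (u v t : W) :
    cs.inversionSign (u * v) t = cs.inversionSign v t * cs.inversionSign u (v * t * v⁻¹) := by
  have h := congrArg Prod.snd (congrFun (congrArg DFunLike.coe (map_mul cs.signRep u v)) (t, 1))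
  simp only [Equiv.Perm.mul_apply, signRep_apply, mul_one] at h
  rw [inversionSign, signRep_apply, h, mul_one, mul_comm]

@[simp]
theorem inversionSign_one (t : W) : cs.inversionSign 1 t = 1 := by
  simp [inversionSign]

theorem inversionSign_inv (u t : W) :
    cs.inversionSign u⁻¹ t = cs.inversionSign u (u⁻¹ * t * u) := by
  have h := cs.inversionSign_mul u u⁻¹ t
  rw [mul_inv_cancel, inversionSign_one, inv_inv, eq_comm, mul_eq_one_iff_eq_inv] at h
  rw [h, Int.units_inv_eq_self]

theorem inversionSign_simple_simple (i : B) : cs.inversionSign (s i) (s i) = -1 := by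
  classical
  simpa [rightInvSeq] using cs.inversionSign_wordProd [i] (s i)

theorem inversionSign_self {t : W} (ht : cs.IsReflection t) : cs.inversionSign t t = -1 := by
  obtain ⟨u, i, rfl⟩ := ht
  simp [inversionSign_mul, inversionSign_inv, inversionSign_simple_simple, mul_assoc]

theorem mem_rightInvSeq_of_inversionSign_eq_neg_one {ω : List B} {t : W}
    (h : cs.inversionSign (π ω) t = -1) : t ∈ cs.rightInvSeq ω := by
  classical
  rw [← count_pos_iff, Nat.pos_iff_ne_zero]
  intro h0
  rw [inversionSign_wordProd, h0, pow_zero] at h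
  exact absurd h (by decide)

theorem isRightInversion_of_inversionSign_eq_neg_one {w t : W}
    (h : cs.inversionSign w t = -1) : cs.IsRightInversion w t := by
  obtain ⟨ω, hω, rfl⟩ := cs.exists_isReduced w
  exact cs.isRightInversion_of_mem_rightInvSeq hω (cs.mem_rightInvSeq_of_inversionSign_eq_neg_one h)

theorem inversionSign_eq_neg_one_iff {w t : W} (ht : cs.IsReflection t) :
    cs.inversionSign w t = -1 ↔ cs.IsRightInversion w t := by
  refine ⟨cs.isRightInversion_of_inversionSign_eq_neg_one, fun hwt => ?_⟩
  rcases Int.units_eq_one_or (cs.inversionSign w t) with h | h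
  · -- then `t` would be a right inversion of `w * t` as well, as `η t t = -1`
    have h' : cs.inversionSign (w * t) t = -1 := by
      have := cs.inversionSign_mul (w * t) t t
      rw [mul_inv_cancel_right, mul_assoc, ht.mul_self, mul_one, h,
        inversionSign_self cs ht] at this
      exact neg_eq_iff_eq_neg.1 (by simpa using this.symm)
    have := (cs.isRightInversion_of_inversionSign_eq_neg_one h').2
    rw [mul_assoc, ht.mul_self, mul_one] at this
    exact absurd hwt.2 (by omega)
  · exact h

theorem inversionSign_eq_one_iff {w t : W} (ht : cs.IsReflection t) :
    cs.inversionSign w t = 1 ↔ ¬ cs.IsRightInversion w t := by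
  rw [← inversionSign_eq_neg_one_iff cs ht]
  rcases Int.units_eq_one_or (cs.inversionSign w t) with h | h <;> simp [h]

theorem mem_rightInvSeq_of_isRightInversion {ω : List B} {t : W}
    (h : cs.IsRightInversion (π ω) t) : t ∈ cs.rightInvSeq ω :=
  cs.mem_rightInvSeq_of_inversionSign_eq_neg_one ((cs.inversionSign_eq_neg_one_iff h.1).2 h)

theorem exists_wordProd_mul_simple_eq_eraseIdx {ω : List B} {i : B}
    (h : cs.IsRightDescent (π ω) i) :
    ∃ k < ω.length, π ω * s i = π (ω.eraseIdx k) := by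
  rw [← isRightInversion_simple_iff_isRightDescent] at h
  obtain ⟨k, hk, hki⟩ := mem_iff_getElem.1 (cs.mem_rightInvSeq_of_isRightInversion h)
  refine ⟨k, by simpa using hk, ?_⟩
  rw [← wordProd_mul_getD_rightInvSeq, getD_eq_getElem _ _ hk, hki]

variable {cs} in
theorem IsReduced.exists_sublist_isReduced_wordProd_mul_simple {ω : List B}
    (hω : cs.IsReduced ω) (i : B) :
    ∃ ω', ω' <+ ω ++ [i] ∧ cs.IsReduced ω' ∧ π ω' = π ω * s i := by
  have hlen := cs.length_mul_simple (π ω) i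
  rw [hω.eq] at hlen
  by_cases hi : cs.IsRightDescent (π ω) i
  · obtain ⟨k, hk, hki⟩ := cs.exists_wordProd_mul_simple_eq_eraseIdx hi
    refine ⟨ω.eraseIdx k, (eraseIdx_sublist ω k).trans (sublist_append_left ω [i]), ?_, hki.symm⟩
    rw [IsRightDescent, hω.eq] at hi
    rw [IsReduced, ← hki, length_eraseIdx_of_lt hk]
    omega
  · refine ⟨ω ++ [i], Sublist.refl _, ?_, by rw [wordProd_append, wordProd_singleton]⟩
    rw [IsRightDescent, hω.eq] at hi
    rw [IsReduced, wordProd_append, wordProd_singleton, length_append, length_singleton]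
    omega

theorem exists_isReduced_of_mem_closure {I : Set B} {u : W}
    (hu : u ∈ Subgroup.closure (cs.simple '' I)) :
    ∃ ω : List B, (∀ i ∈ ω, i ∈ I) ∧ cs.IsReduced ω ∧ π ω = u := by
  suffices ∀ ω : List B, (∀ j ∈ ω, j ∈ I) → cs.IsReduced ω → ∀ i ∈ I,
      ∃ ω' : List B, (∀ j ∈ ω', j ∈ I) ∧ cs.IsReduced ω' ∧ π ω' = π ω * s i by
    induction hu using Subgroup.closure_induction_right with
    | one => exact ⟨[], by simp, by simp [IsReduced], rfl⟩
    | mul_right _ _ _ hy ih =>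
      obtain ⟨i, hi, rfl⟩ := hy
      obtain ⟨ω, hωI, hω, rfl⟩ := ih
      exact this ω hωI hω i hi
    | mul_inv_cancel _ _ _ hy ih =>
      obtain ⟨i, hi, rfl⟩ := hy
      obtain ⟨ω, hωI, hω, rfl⟩ := ih
      simpa using this ω hωI hω i hi
  intro ω hωI hω i hi
  obtain ⟨ω', hsub, hω', hprod⟩ := hω.exists_sublist_isReduced_wordProd_mul_simple i
  refine ⟨ω', fun j hj => ?_, hω', hprod⟩
  rcases mem_append.1 (hsub.subset hj) with hj | hj
  exacts [hωI j hj, mem_singleton.1 hj ▸ hi]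

def rightInversionSet (w : W) : Set W := {t | cs.IsRightInversion w t}

theorem rightInversionSet_finite (w : W) : (cs.rightInversionSet w).Finite := by
  obtain ⟨ω, -, rfl⟩ := cs.exists_isReduced w
  exact (cs.rightInvSeq ω).finite_toSet.subset fun t ht => cs.mem_rightInvSeq_of_isRightInversion ht

theorem rightInversionSet_injective : Function.Injective cs.rightInversionSet := by
  intro u v huv
  have hsign : ∀ t, cs.IsReflection t → cs.inversionSign u t = cs.inversionSign v t := by
    intro t ht
    have hiff : cs.inversionSign u t = -1 ↔ cs.inversionSign v t = -1 := by
      rw [inversionSign_eq_neg_one_iff cs ht, inversionSign_eq_neg_one_iff cs ht]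
      exact Set.ext_iff.1 huv t
    rcases Int.units_eq_one_or (cs.inversionSign u t) with h | h <;>
      rcases Int.units_eq_one_or (cs.inversionSign v t) with h' | h' <;> simp_all
  rw [← mul_inv_eq_one]
  by_contra hne
  obtain ⟨i, hi⟩ := cs.exists_rightDescent_of_ne_one hne
  rw [← isRightInversion_simple_iff_isRightDescent,
    ← inversionSign_eq_neg_one_iff cs (cs.isReflection_simple i), inversionSign_mul, inv_inv,
    inversionSign_inv, hsign _ (by simpa using (cs.isReflection_simple i).conj v⁻¹),
    Int.units_mul_self] at hi
  exact absurd hi (by decide)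

variable {cs} in
theorem length_mul_wordProd_add_length_le {I : Set B} {w : W}
    (hw : ∀ i ∈ I, cs.IsRightDescent w i) {ω : List B} (hωI : ∀ i ∈ ω, i ∈ I)
    (hω : cs.IsReduced ω) : ℓ (w * π ω) + ω.length ≤ ℓ w := by
  induction ω with
  | nil => simp
  | cons i ω ih =>
    have hω' : cs.IsReduced ω := hω.drop 1
    have hlen := ih (fun j hj => hωI j (mem_cons_of_mem i hj)) hω'
    set t := (π ω)⁻¹ * s i * π ω
    have ht : cs.IsReflection t := by simpa using (cs.isReflection_simple i).conj (π ω)⁻¹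
    have hωt : π ω * t = π (i :: ω) := by simp only [t, wordProd_cons]; group
    have hconj : π ω * t * (π ω)⁻¹ = s i := by simp only [t]; group
    have hsign : cs.inversionSign (w * π ω) t = -1 := by
      have hω_t : cs.inversionSign (π ω) t = 1 := by
        rw [inversionSign_eq_one_iff cs ht, IsRightInversion, hωt, hω.eq, hω'.eq]
        simp
      rw [inversionSign_mul, hω_t, hconj, one_mul,
        inversionSign_eq_neg_one_iff cs (cs.isReflection_simple i),
        isRightInversion_simple_iff_isRightDescent]
      exact hw i (hωI i mem_cons_self)
    have hlt := (cs.isRightInversion_of_inversionSign_eq_neg_one hsign).2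
    rw [mul_assoc, hωt] at hlt
    rw [length_cons]
    omega

theorem rightInversionSet_subset_of_mem_closure {I : Set B} {w : W}
    (hw : ∀ i ∈ I, cs.IsRightDescent w i) {u : W} (hu : u ∈ Subgroup.closure (cs.simple '' I)) :
    cs.rightInversionSet u ⊆ cs.rightInversionSet w := by
  obtain ⟨ω, hωI, hω, hπ⟩ := cs.exists_isReduced_of_mem_closure (inv_mem hu)
  rw [← inv_inv u, ← hπ]
  rintro t ⟨ht, hut⟩
  refine ⟨ht, ?_⟩
  have := length_mul_wordProd_add_length_le hw hωI hω
  calc ℓ (w * t) ≤ ℓ (w * π ω) + ℓ ((π ω)⁻¹ * t) := by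
        simpa [mul_assoc] using cs.length_mul_le (w * π ω) ((π ω)⁻¹ * t)
    _ < ℓ (w * π ω) + ℓ (π ω)⁻¹ := by gcongr
    _ ≤ ℓ w := by rw [length_inv, hω.eq]; omega

theorem finite_closure_of_isRightDescent {I : Set B} {w : W}
    (hw : ∀ i ∈ I, cs.IsRightDescent w i) :
    (Subgroup.closure (cs.simple '' I) : Set W).Finite :=
  Set.Finite.of_finite_image
    ((cs.rightInversionSet_finite w).finite_subsets.subset <| by
      rintro _ ⟨u, hu, rfl⟩
      exact cs.rightInversionSet_subset_of_mem_closure hw hu)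
    cs.rightInversionSet_injective.injOn

theorem exists_isRightDescent_of_finite {I : Set B}
    (h : (Subgroup.closure (cs.simple '' I) : Set W).Finite) :
    ∃ w : W, ∀ i ∈ I, cs.IsRightDescent w i := by
  obtain ⟨w, hw, hmax⟩ := h.exists_maximalFor cs.length _ ⟨1, one_mem _⟩
  refine ⟨w, fun i hi => ?_⟩
  have hwi : w * s i ∈ Subgroup.closure (cs.simple '' I) :=
    mul_mem hw (Subgroup.subset_closure ⟨i, hi, rfl⟩)
  have hlen := cs.length_mul_simple w i
  have hle := hmax hwi
  rw [IsRightDescent]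
  omega

theorem exists_forall_isLeftDescent_iff {I : Set B} :
    (∃ w : W, ∀ i ∈ I, cs.IsLeftDescent w i) ↔ ∃ w : W, ∀ i ∈ I, cs.IsRightDescent w i :=
  ⟨fun ⟨w, hw⟩ => ⟨w⁻¹, fun i hi => cs.isRightDescent_inv_iff.2 (hw i hi)⟩,
    fun ⟨w, hw⟩ => ⟨w⁻¹, fun i hi => cs.isLeftDescent_inv_iff.2 (hw i hi)⟩⟩

end CoxeterSystem

/-- Let `(W, S)` be a Coxeter system and `I ⊆ S` (encoded by a set `I` of
indices of simple reflections). The following are equivalent: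
(a) the standard parabolic subgroup `W_I` generated by `I` is finite;
(b) there exists `w ∈ W` with `l(s w) < l(w)` for all `s ∈ I`;
(c) there exists `w ∈ W` with `l(w s) < l(w)` for all `s ∈ I`. -/
theorem stmt_0 {B W : Type*} [Group W] {M : CoxeterMatrix B} (cs : CoxeterSystem M W)
    (I : Set B) :
    ((Subgroup.closure (cs.simple '' I) : Set W).Finite ↔
      ∃ w : W, ∀ i ∈ I, cs.IsLeftDescent w i) ∧
    ((Subgroup.closure (cs.simple '' I) : Set W).Finite ↔
      ∃ w : W, ∀ i ∈ I, cs.IsRightDescent w i) := by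
  have hright : (Subgroup.closure (cs.simple '' I) : Set W).Finite ↔
      ∃ w : W, ∀ i ∈ I, cs.IsRightDescent w i :=
    ⟨cs.exists_isRightDescent_of_finite, fun ⟨_, hw⟩ => cs.finite_closure_of_isRightDescent hw⟩
  exact ⟨hright.trans cs.exists_forall_isLeftDescent_iff.symm, hright⟩
end

section
/- For any w, u, v ∈ W, the structure constant f_{w,u,v} is a polynomial in ξ = q^{1/2} − q^{−1/2} with non-negative integer coefficients, its degree as a polynomial in ξ is at most min{l(w), l(u), l(v)}, and f_{w,u,v} = f_{u,v^{-1},w^{-1}} = f_{v^{-1},w,u^{-1}}. -/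
/-!
The Hecke algebra `H` of a Coxeter system `(W, S)` over `A = ℤ[q^{1/2}, q^{-1/2}]`.
We model `A` as `LaurentPolynomial ℤ`, with the Laurent variable `T 1` playing the role
of `q^{1/2}` (so `q = T 2`).  The Hecke algebra is axiomatized as an `A`-algebra `H`
together with an `A`-basis `TT = (T_w)_{w ∈ W}` satisfying the defining relations
`(T_s - q)(T_s + 1) = 0` and `T_w T_u = T_{wu}` whenever `l(wu) = l(w) + l(u)`
(and `T_1 = 1`).
-/

noncomputable section

/-- `q = (q^{1/2})^2` in `A = ℤ[q^{1/2}, q^{-1/2}]`. -/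
def heckeQ : LaurentPolynomial ℤ := LaurentPolynomial.T 2

/-- `ξ = q^{1/2} - q^{-1/2}` in `A = ℤ[q^{1/2}, q^{-1/2}]`. -/
def heckeXi : LaurentPolynomial ℤ := LaurentPolynomial.T 1 - LaurentPolynomial.T (-1)

variable {B W H : Type*} [Group W] [Ring H] [Algebra (LaurentPolynomial ℤ) H]
  {M : CoxeterMatrix B}

/-- The hypothesis that `TT` is the standard basis `(T_w)_{w ∈ W}` of the Hecke algebra `H`
of the Coxeter system `cs`. -/
def IsHeckeBasis (cs : CoxeterSystem M W) (TT : Module.Basis W (LaurentPolynomial ℤ) H) : Prop :=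
  TT 1 = 1 ∧
  (∀ i : B, (TT (cs.simple i) - algebraMap (LaurentPolynomial ℤ) H heckeQ) *
    (TT (cs.simple i) + 1) = 0) ∧
  (∀ w u : W, cs.length (w * u) = cs.length w + cs.length u → TT w * TT u = TT (w * u))

/-- `T̃_w = q^{-l(w)/2} T_w`. -/
def Ttilde (cs : CoxeterSystem M W) (TT : Module.Basis W (LaurentPolynomial ℤ) H) (w : W) : H :=
  (LaurentPolynomial.T (-(cs.length w : ℤ)) : LaurentPolynomial ℤ) • TT w

/-- The structure constants `f_{w,u,v} ∈ A` defined by `T̃_w T̃_u = Σ_v f_{w,u,v} T̃_v`;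
equivalently, `f_{w,u,v}` is `q^{l(v)/2}` times the coordinate of `T̃_w T̃_u` at `T_v`. -/
def heckeF (cs : CoxeterSystem M W) (TT : Module.Basis W (LaurentPolynomial ℤ) H) (w u v : W) :
    LaurentPolynomial ℤ :=
  (LaurentPolynomial.T (cs.length v : ℤ) : LaurentPolynomial ℤ) *
    TT.repr (Ttilde cs TT w * Ttilde cs TT u) v

end

/-!
In the basis `T̃`, multiplication by a simple reflection reads
`T̃_s T̃_w = T̃_{sw} + [sw < w] ξ T̃_w`, so peeling a left descent off `w` gives
`f_{w,u,v} = f_{sw,u,sv} + [sv < v] ξ f_{sw,u,v}`, and by induction on `l(w)` the constant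
`f_{w,u,v}` is a polynomial in `ξ` with non-negative coefficients and degree at most `l(w)`.

The coefficient of `T̃_1` in `T̃_w T̃_u` is `δ_{u,w⁻¹}`; by linearity the functional
`τ = [T̃_1]` satisfies `τ(T̃_w h) = [T̃_{w⁻¹}] h` and `τ(h T̃_{v⁻¹}) = [T̃_v] h`, whence
`f_{w,u,v} = τ(T̃_w T̃_u T̃_{v⁻¹}) = f_{u,v⁻¹,w⁻¹}`. Applying the degree bound to the three
rotated constants bounds the degree by the minimum, since `ξ` is transcendental over `ℤ`:
a polynomial vanishing at `ξ` is divisible by `X` (specialize `q^{1/2} = 1`), and `ξ` is not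
a zero divisor.
-/

open LaurentPolynomial Polynomial

theorem heckeXi_ne_zero : heckeXi ≠ 0 := by
  rw [heckeXi, sub_ne_zero]
  intro h
  simpa using congr_arg LaurentPolynomial.degree h

theorem aeval_heckeXi_injective :
    Function.Injective (aeval heckeXi : ℤ[X] → LaurentPolynomial ℤ) := by
  rw [injective_iff_map_eq_zero]
  intro p hp
  by_contra hp0
  obtain ⟨q, hpq, hq⟩ := p.exists_eq_pow_rootMultiplicity_mul_and_not_dvd hp0 0
  rw [map_zero, sub_zero, X_dvd_iff] at hq
  rw [hpq, map_zero, sub_zero, map_mul, map_pow, aeval_X, mul_eq_zero] at hp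
  have hq0 : aeval heckeXi q = 0 := hp.resolve_left (pow_ne_zero _ heckeXi_ne_zero)
  let ε := (LaurentPolynomial.eval₂ (RingHom.id ℤ) 1).toIntAlgHom
  apply hq
  have hε : ε heckeXi = 0 := by simp [ε, heckeXi, eval₂_T]
  calc q.coeff 0 = aeval (ε heckeXi) q := by rw [hε, coeff_zero_eq_aeval_zero]
    _ = 0 := by rw [aeval_algHom_apply, hq0, map_zero]

def IsNonnegPolyIn {R : Type*} [CommRing R] [Algebra ℤ R] (x : R) (n : ℕ) (a : R) : Prop :=
  ∃ p : ℤ[X], (∀ i, 0 ≤ p.coeff i) ∧ p.natDegree ≤ n ∧ aeval x p = a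

namespace IsNonnegPolyIn

variable {R : Type*} [CommRing R] [Algebra ℤ R] {x a b : R} {m n : ℕ}

theorem zero : IsNonnegPolyIn x n 0 :=
  ⟨0, fun _ => le_rfl, by simp, map_zero _⟩

theorem one : IsNonnegPolyIn x n 1 :=
  ⟨1, fun i => by rw [coeff_one]; split_ifs <;> norm_num, by simp, map_one _⟩

theorem mono (ha : IsNonnegPolyIn x m a) (hmn : m ≤ n) : IsNonnegPolyIn x n a :=
  let ⟨p, hp, hpm, hpa⟩ := ha
  ⟨p, hp, hpm.trans hmn, hpa⟩

theorem add (ha : IsNonnegPolyIn x n a) (hb : IsNonnegPolyIn x n b) :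
    IsNonnegPolyIn x n (a + b) :=
  let ⟨p, hp, hpn, hpa⟩ := ha
  let ⟨r, hr, hrn, hrb⟩ := hb
  ⟨p + r, fun i => by rw [coeff_add]; exact add_nonneg (hp i) (hr i),
    (natDegree_add_le _ _).trans (max_le hpn hrn), by rw [map_add, hpa, hrb]⟩

theorem self_mul (ha : IsNonnegPolyIn x n a) : IsNonnegPolyIn x (n + 1) (x * a) := by
  obtain ⟨p, hp, hpn, hpa⟩ := ha
  refine ⟨X * p, fun i => ?_, ?_, by rw [map_mul, aeval_X, hpa]⟩
  · cases i with
    | zero => simp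
    | succ i => rw [coeff_X_mul]; exact hp i
  · exact (natDegree_mul_le.trans (add_le_add natDegree_X_le hpn)).trans_eq (add_comm 1 n)

end IsNonnegPolyIn

namespace Module.Basis

variable {ι R A : Type*} [CommSemiring R] [Semiring A] [Algebra R A] (b : Basis ι R A)

theorem repr_mul_left_apply_eq_of_basis {a : A} {i : ι} {φ : A →ₗ[R] R}
    (h : ∀ j, b.repr (a * b j) i = φ (b j)) (x : A) : b.repr (a * x) i = φ x :=
  LinearMap.congr_fun (b.ext (f₁ := b.coord i ∘ₗ LinearMap.mulLeft R a) h) x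

theorem repr_mul_right_apply_eq_of_basis {a : A} {i : ι} {φ : A →ₗ[R] R}
    (h : ∀ j, b.repr (b j * a) i = φ (b j)) (x : A) : b.repr (x * a) i = φ x :=
  LinearMap.congr_fun (b.ext (f₁ := b.coord i ∘ₗ LinearMap.mulRight R a) h) x

end Module.Basis

namespace CoxeterSystem

variable {B W H : Type*} [Group W] [Ring H] [Algebra (LaurentPolynomial ℤ) H]
  {M : CoxeterMatrix B} (cs : CoxeterSystem M W) (TT : Module.Basis W (LaurentPolynomial ℤ) H)

noncomputable def tildeBasis : Module.Basis W (LaurentPolynomial ℤ) H :=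
  TT.isUnitSMul fun w => isUnit_T (-(cs.length w : ℤ))

theorem tildeBasis_apply (w : W) : cs.tildeBasis TT w = Ttilde cs TT w :=
  Module.Basis.isUnitSMul_apply _ w

theorem heckeF_eq_tildeBasis_repr (w u v : W) :
    heckeF cs TT w u v = (cs.tildeBasis TT).repr (Ttilde cs TT w * Ttilde cs TT u) v := by
  rw [heckeF, tildeBasis, Module.Basis.repr_isUnitSMul, Units.smul_def, smul_eq_mul]
  congr 1
  rw [eq_comm, Units.inv_eq_of_mul_eq_one_right (by rw [IsUnit.unit_spec, ← T_add,
    neg_add_cancel, T_zero])]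

end CoxeterSystem

namespace IsHeckeBasis

variable {B W H : Type*} [Group W] [Ring H] [Algebra (LaurentPolynomial ℤ) H]
  {M : CoxeterMatrix B} {cs : CoxeterSystem M W} {TT : Module.Basis W (LaurentPolynomial ℤ) H}
  (hT : IsHeckeBasis cs TT)
include hT

open scoped Classical

theorem Ttilde_one : Ttilde cs TT 1 = 1 := by
  rw [Ttilde, cs.length_one, hT.1, Nat.cast_zero, neg_zero, T_zero, one_smul]

theorem Ttilde_mul_of_length_mul {w u : W} (h : cs.length (w * u) = cs.length w + cs.length u) :
    Ttilde cs TT w * Ttilde cs TT u = Ttilde cs TT (w * u) := by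
  rw [Ttilde, Ttilde, Ttilde, smul_mul_smul, hT.2.2 w u h, ← T_add, h]
  push_cast
  ring_nf

theorem Ttilde_simple_mul_self (i : B) :
    Ttilde cs TT (cs.simple i) * Ttilde cs TT (cs.simple i) =
      1 + heckeXi • Ttilde cs TT (cs.simple i) := by
  have hquad := hT.2.1 i
  set t := TT (cs.simple i)
  have hsq : t * t = (heckeQ - 1) • t + heckeQ • 1 := by
    rw [sub_mul, mul_add, mul_add, mul_one, mul_one, sub_eq_zero, ← Algebra.smul_def,
      Algebra.algebraMap_eq_smul_one] at hquad
    rw [eq_sub_of_add_eq hquad, sub_smul, one_smul]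
    abel
  rw [Ttilde, cs.length_simple, smul_mul_smul, hsq, smul_add, smul_smul, smul_smul, heckeXi,
    heckeQ, smul_smul]
  simp only [sub_mul, mul_sub, ← T_add]
  norm_num
  rw [add_comm]

theorem Ttilde_eq_Ttilde_simple_mul {w : W} {i : B} (hw : cs.IsLeftDescent w i) :
    Ttilde cs TT w = Ttilde cs TT (cs.simple i) * Ttilde cs TT (cs.simple i * w) := by
  rw [hT.Ttilde_mul_of_length_mul, cs.simple_mul_simple_cancel_left]
  rw [cs.simple_mul_simple_cancel_left, cs.length_simple, ← cs.isLeftDescent_iff.mp hw, add_comm]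

theorem Ttilde_eq_Ttilde_mul_simple {w : W} {i : B} (hw : cs.IsRightDescent w i) :
    Ttilde cs TT w = Ttilde cs TT (w * cs.simple i) * Ttilde cs TT (cs.simple i) := by
  rw [hT.Ttilde_mul_of_length_mul, cs.simple_mul_simple_cancel_right]
  rw [cs.simple_mul_simple_cancel_right, cs.length_simple, ← cs.isRightDescent_iff.mp hw]

theorem Ttilde_simple_mul (w : W) (i : B) :
    Ttilde cs TT (cs.simple i) * Ttilde cs TT w =
      Ttilde cs TT (cs.simple i * w) +
        (if cs.IsLeftDescent w i then heckeXi else 0) • Ttilde cs TT w := by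
  by_cases hw : cs.IsLeftDescent w i
  · rw [if_pos hw, hT.Ttilde_eq_Ttilde_simple_mul hw, ← mul_assoc, hT.Ttilde_simple_mul_self,
      add_mul, one_mul, smul_mul_assoc]
  · rw [if_neg hw, zero_smul, add_zero, hT.Ttilde_mul_of_length_mul]
    rw [cs.not_isLeftDescent_iff.mp hw, cs.length_simple, add_comm]

theorem Ttilde_mul_simple (w : W) (i : B) :
    Ttilde cs TT w * Ttilde cs TT (cs.simple i) =
      Ttilde cs TT (w * cs.simple i) +
        (if cs.IsRightDescent w i then heckeXi else 0) • Ttilde cs TT w := by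
  by_cases hw : cs.IsRightDescent w i
  · rw [if_pos hw, hT.Ttilde_eq_Ttilde_mul_simple hw, mul_assoc, hT.Ttilde_simple_mul_self,
      mul_add, mul_one, mul_smul_comm]
  · rw [if_neg hw, zero_smul, add_zero, hT.Ttilde_mul_of_length_mul]
    rw [cs.not_isRightDescent_iff.mp hw, cs.length_simple]

theorem tildeBasis_repr_Ttilde_mul_Ttilde_one (w u : W) :
    (cs.tildeBasis TT).repr (Ttilde cs TT w * Ttilde cs TT u) 1 = if u = w⁻¹ then 1 else 0 := by
  induction hn : cs.length u using Nat.strong_induction_on generalizing u w with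
  | _ n ih =>
  rcases eq_or_ne u 1 with rfl | hu
  · rw [hT.Ttilde_one, mul_one, ← cs.tildeBasis_apply, Module.Basis.repr_self,
      Finsupp.single_apply]
    simp [eq_comm]
  obtain ⟨i, hi⟩ := cs.exists_leftDescent_of_ne_one hu
  have hlen := cs.isLeftDescent_iff.mp hi
  rw [hT.Ttilde_eq_Ttilde_simple_mul hi, ← mul_assoc, hT.Ttilde_mul_simple, add_mul,
    smul_mul_assoc, map_add, map_smul, Finsupp.add_apply, Finsupp.smul_apply, smul_eq_mul,
    ih _ (by omega) _ _ rfl, ih _ (by omega) _ _ rfl]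
  have hvanish : (if cs.IsRightDescent w i then heckeXi else 0) *
      (if cs.simple i * u = w⁻¹ then 1 else 0) = 0 := by
    split_ifs with hw hwu
    -- `l(u) = l(ws) < l(w) = l(su)`, against `su < u`
    · have hlw := cs.isRightDescent_iff.mp hw
      have : cs.length (w * cs.simple i) = cs.length u := by
        rw [← cs.length_inv, mul_inv_rev, cs.inv_simple, ← hwu, cs.simple_mul_simple_cancel_left]
      rw [← cs.length_inv w, ← hwu] at hlw
      omega
    all_goals simp
  rw [hvanish, add_zero, mul_inv_rev, cs.inv_simple]
  simp only [mul_right_inj]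

theorem tildeBasis_repr_Ttilde_mul_one (w : W) (h : H) :
    (cs.tildeBasis TT).repr (Ttilde cs TT w * h) 1 = (cs.tildeBasis TT).repr h w⁻¹ := by
  refine (cs.tildeBasis TT).repr_mul_left_apply_eq_of_basis (φ := (cs.tildeBasis TT).coord w⁻¹)
    (fun x => ?_) h
  rw [cs.tildeBasis_apply, hT.tildeBasis_repr_Ttilde_mul_Ttilde_one, Module.Basis.coord_apply,
    ← cs.tildeBasis_apply, Module.Basis.repr_self, Finsupp.single_apply]

theorem tildeBasis_repr_mul_Ttilde_inv_one (h : H) (v : W) :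
    (cs.tildeBasis TT).repr (h * Ttilde cs TT v⁻¹) 1 = (cs.tildeBasis TT).repr h v := by
  refine (cs.tildeBasis TT).repr_mul_right_apply_eq_of_basis (φ := (cs.tildeBasis TT).coord v)
    (fun x => ?_) h
  rw [cs.tildeBasis_apply, hT.tildeBasis_repr_Ttilde_mul_Ttilde_one, Module.Basis.coord_apply,
    ← cs.tildeBasis_apply, Module.Basis.repr_self, Finsupp.single_apply, inv_inj]
  exact if_congr eq_comm rfl rfl

theorem heckeF_rotate (w u v : W) : heckeF cs TT w u v = heckeF cs TT u v⁻¹ w⁻¹ := by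
  rw [cs.heckeF_eq_tildeBasis_repr, cs.heckeF_eq_tildeBasis_repr,
    ← hT.tildeBasis_repr_mul_Ttilde_inv_one, mul_assoc, hT.tildeBasis_repr_Ttilde_mul_one]

theorem tildeBasis_repr_Ttilde_simple_mul (i : B) (h : H) (v : W) :
    (cs.tildeBasis TT).repr (Ttilde cs TT (cs.simple i) * h) v =
      (cs.tildeBasis TT).repr h (cs.simple i * v) +
        (if cs.IsLeftDescent v i then heckeXi else 0) * (cs.tildeBasis TT).repr h v := by
  refine (cs.tildeBasis TT).repr_mul_left_apply_eq_of_basis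
    (φ := (cs.tildeBasis TT).coord (cs.simple i * v) +
      (if cs.IsLeftDescent v i then heckeXi else 0) • (cs.tildeBasis TT).coord v)
    (fun x => ?_) h
  rw [cs.tildeBasis_apply, hT.Ttilde_simple_mul, ← cs.tildeBasis_apply, ← cs.tildeBasis_apply]
  simp only [map_add, map_smul, LinearMap.add_apply, LinearMap.smul_apply,
    Module.Basis.coord_apply, Finsupp.add_apply, Finsupp.smul_apply, Module.Basis.repr_self,
    Finsupp.single_apply, smul_eq_mul]
  have hiff : cs.simple i * x = v ↔ x = cs.simple i * v := by
    constructor <;> rintro rfl <;> rw [cs.simple_mul_simple_cancel_left]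
  rw [if_congr hiff rfl rfl]
  rcases eq_or_ne x v with rfl | hxv
  · rfl
  · simp only [if_neg hxv, mul_zero]

theorem heckeF_one_left (u v : W) : heckeF cs TT 1 u v = if u = v then 1 else 0 := by
  rw [cs.heckeF_eq_tildeBasis_repr, hT.Ttilde_one, one_mul, ← cs.tildeBasis_apply,
    Module.Basis.repr_self, Finsupp.single_apply]

theorem heckeF_of_isLeftDescent {w : W} {i : B} (hw : cs.IsLeftDescent w i) (u v : W) :
    heckeF cs TT w u v = heckeF cs TT (cs.simple i * w) u (cs.simple i * v) +
      (if cs.IsLeftDescent v i then heckeXi else 0) * heckeF cs TT (cs.simple i * w) u v := by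
  simp only [cs.heckeF_eq_tildeBasis_repr]
  rw [hT.Ttilde_eq_Ttilde_simple_mul hw, mul_assoc, hT.tildeBasis_repr_Ttilde_simple_mul]

theorem isNonnegPolyIn_heckeF (w u v : W) :
    IsNonnegPolyIn heckeXi (cs.length w) (heckeF cs TT w u v) := by
  induction hn : cs.length w using Nat.strong_induction_on generalizing w v with
  | _ n ih =>
  rcases eq_or_ne w 1 with rfl | hw
  · rw [hT.heckeF_one_left]
    split_ifs
    exacts [.one, .zero]
  obtain ⟨i, hi⟩ := cs.exists_leftDescent_of_ne_one hw
  have hlen := cs.isLeftDescent_iff.mp hi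
  have ih' (v' : W) : IsNonnegPolyIn heckeXi (n - 1) (heckeF cs TT (cs.simple i * w) u v') :=
    ih _ (by omega) _ _ (by omega)
  rw [hT.heckeF_of_isLeftDescent hi]
  split_ifs
  · exact ((ih' _).mono (by omega)).add ((ih' v).self_mul.mono (by omega))
  · rw [zero_mul, add_zero]
    exact (ih' _).mono (by omega)

end IsHeckeBasis

/-- For any `w, u, v ∈ W`, the structure constant `f_{w,u,v}` is a polynomial
in `ξ = q^{1/2} - q^{-1/2}` with non-negative integer coefficients, of degree at most
`min {l(w), l(u), l(v)}`, and `f_{w,u,v} = f_{u,v⁻¹,w⁻¹} = f_{v⁻¹,w,u⁻¹}`. -/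
theorem stmt_2 {B W H : Type*} [Group W] [Ring H] [Algebra (LaurentPolynomial ℤ) H]
    {M : CoxeterMatrix B} (cs : CoxeterSystem M W)
    (TT : Module.Basis W (LaurentPolynomial ℤ) H) (hT : IsHeckeBasis cs TT) (w u v : W) :
    (∃ p : Polynomial ℤ, (∀ i : ℕ, 0 ≤ p.coeff i) ∧
      p.natDegree ≤ min (cs.length w) (min (cs.length u) (cs.length v)) ∧
      Polynomial.aeval heckeXi p = heckeF cs TT w u v) ∧
    heckeF cs TT w u v = heckeF cs TT u v⁻¹ w⁻¹ ∧
    heckeF cs TT w u v = heckeF cs TT v⁻¹ w u⁻¹ := by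
  have hrot₁ := hT.heckeF_rotate w u v
  have hrot₂ : heckeF cs TT w u v = heckeF cs TT v⁻¹ w u⁻¹ := by
    rw [hrot₁, hT.heckeF_rotate, inv_inv]
  obtain ⟨p, hp_nonneg, hpw, hp⟩ := hT.isNonnegPolyIn_heckeF w u v
  obtain ⟨p₁, -, hp₁u, hp₁⟩ := hT.isNonnegPolyIn_heckeF u v⁻¹ w⁻¹
  obtain ⟨p₂, -, hp₂v, hp₂⟩ := hT.isNonnegPolyIn_heckeF v⁻¹ w u⁻¹
  have hp₁p : p₁ = p := aeval_heckeXi_injective (by rw [hp₁, hp, hrot₁])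
  have hp₂p : p₂ = p := aeval_heckeXi_injective (by rw [hp₂, hp, hrot₂])
  rw [hp₁p] at hp₁u
  rw [hp₂p, cs.length_inv] at hp₂v
  exact ⟨⟨p, hp_nonneg, le_min hpw (le_min hp₁u hp₂v), hp⟩, hrot₁, hrot₂⟩
end
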